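/- arXiv:math/0307360 — 2 statements merged into one kernel-verified Lean document; each statement's English description precedes it below -/
import Mathlib

section
/- The space of alternating 3-forms on ℝ⁷ annihilated by the derivation action of each of the three 2-forms A₁ = e₃₄+e₅₆, A₂ = e₃₅−e₄₆, A₃ = e₃₆+e₄₅ (the generators of su(2) ⊂ so(7)) has dimension exactly 10; it is spanned by the nine 3-forms eᵢ∧deⱼ with i,j ∈ {1,2,7} together with e₁∧e₂∧e₇, where de₁ := e₃₅+e₄₆, de₂ := e₄₅−e₃₆, de₇ := e₃₄−e₅₆. -/
open Matrix

/-- A coordinate `k`-tensor on `ℝⁿ`: the values on `k`-tuples of standard basis vectors. -/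
abbrev Tensor (n k : ℕ) := (Fin k → Fin n) → ℝ

/-- The tensor is alternating, i.e. it is the coordinate expression of an alternating
`k`-form on `ℝⁿ`. -/
def IsAlt {n k : ℕ} (ω : Tensor n k) : Prop :=
  ∀ (f : Fin k → Fin n) (σ : Equiv.Perm (Fin k)),
    ω (f ∘ σ) = ((Equiv.Perm.sign σ : ℤ) : ℝ) * ω f

/-- The Clifford relations `γᵢγⱼ + γⱼγᵢ = -2 δᵢⱼ 𝟙`. -/
def CliffordRel {n N : ℕ} (γ : Fin n → Matrix (Fin N) (Fin N) ℝ) : Prop :=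
  ∀ i j, γ i * γ j + γ j * γ i =
    if i = j then (-2 : ℝ) • (1 : Matrix (Fin N) (Fin N) ℝ) else 0

/-- Clifford action of a vector `X = Σ xᵢ eᵢ`: `γ(X) = Σ xᵢ γᵢ`. -/
noncomputable def gam {n N : ℕ} (γ : Fin n → Matrix (Fin N) (Fin N) ℝ)
    (X : Fin n → ℝ) : Matrix (Fin N) (Fin N) ℝ :=
  ∑ i, X i • γ i

/-- Clifford action of an (alternating) `k`-form:
`ρ(ω) = Σ_{i₁<⋯<i_k} ω(e_{i₁},…,e_{i_k}) γ_{i₁}⋯γ_{i_k}`, written here as the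
full sum over all tuples divided by `k!` (for alternating `ω` and `γ` satisfying the
Clifford relations the two expressions agree). -/
noncomputable def rho {n N : ℕ} (γ : Fin n → Matrix (Fin N) (Fin N) ℝ) {k : ℕ}
    (ω : Tensor n k) : Matrix (Fin N) (Fin N) ℝ :=
  (k.factorial : ℝ)⁻¹ • ∑ f : Fin k → Fin n, ω f • (List.ofFn fun i => γ (f i)).prod

/-- Interior product `X ⌟ ω` in coordinates: `(X⌟ω)(Y₁,…,Y_{k}) = ω(X,Y₁,…,Y_{k})`. -/
noncomputable def inter {n k : ℕ} (X : Fin n → ℝ) (ω : Tensor n (k + 1)) : Tensor n k :=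
  fun g => ∑ j, X j * ω (Fin.cons j g)

/-- Exterior product `X ∧ ω` in coordinates (identifying `X` with a `1`-form via the
standard inner product): `(X∧ω)(Y₀,…,Y_k) = Σ_j (-1)^j ⟨X,Y_j⟩ ω(Y₀,…,Ŷ_j,…,Y_k)`. -/
noncomputable def wedge {n k : ℕ} (X : Fin n → ℝ) (ω : Tensor n k) : Tensor n (k + 1) :=
  fun h => ∑ j : Fin (k + 1), (-1 : ℝ) ^ (j : ℕ) * X (h j) * ω fun i => h (j.succAbove i)

/-- The elementary form `e_{v 0} ∧ ⋯ ∧ e_{v (k-1)}` in coordinates. -/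
noncomputable def elem {n k : ℕ} (v : Fin k → Fin n) : Tensor n k :=
  fun f => Matrix.det (Matrix.of fun i j => if v i = f j then (1 : ℝ) else 0)

/-! ### The derivation action of `2`-forms (elements of `so(7)`) on forms. -/

/-- The skew-symmetric endomorphism `Â` associated to the `2`-form `e_a ∧ e_b`:
`e_a ↦ e_b`, `e_b ↦ -e_a`. -/
noncomputable def hat2 (a b : Fin 7) : Matrix (Fin 7) (Fin 7) ℝ :=
  Matrix.single b a 1 - Matrix.single a b 1

/-- `A₁ = e₃₄ + e₅₆` (0-based indices). -/
noncomputable def A1 : Matrix (Fin 7) (Fin 7) ℝ := hat2 2 3 + hat2 4 5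
/-- `A₂ = e₃₅ - e₄₆` (0-based indices). -/
noncomputable def A2 : Matrix (Fin 7) (Fin 7) ℝ := hat2 2 4 - hat2 3 5
/-- `A₃ = e₃₆ + e₄₅` (0-based indices). -/
noncomputable def A3 : Matrix (Fin 7) (Fin 7) ℝ := hat2 2 5 + hat2 3 4

/-- Derivation action of an endomorphism `M` on a coordinate `k`-tensor:
`(M·T)(X₁,…,X_k) = -Σ_j T(X₁,…,M Xⱼ,…,X_k)`. -/
noncomputable def der {n k : ℕ} (M : Matrix (Fin n) (Fin n) ℝ) (T : Tensor n k) :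
    Tensor n k :=
  fun f => -∑ j : Fin k, ∑ r : Fin n, M r (f j) * T (Function.update f j r)

/-- The standard basis vectors of `ℝ⁷`. -/
noncomputable def E7 (i : Fin 7) : Fin 7 → ℝ := Pi.single i 1

/-- `de₁ = e₃₅ + e₄₆`, `de₂ = e₄₅ - e₃₆`, `de₇ = e₃₄ - e₅₆` (0-based indices). -/
noncomputable def de : Fin 3 → Tensor 7 2 :=
  ![elem ![2, 4] + elem ![3, 5], elem ![3, 4] - elem ![2, 5], elem ![2, 3] - elem ![4, 5]]

/-- The distinguished indices `1, 2, 7` (0-based: `0, 1, 6`). -/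
def idx : Fin 3 → Fin 7 := ![0, 1, 6]

/-- The distinguished index pairs `(1,2), (1,7), (2,7)` (0-based). -/
def pf : Fin 3 → Fin 7 × Fin 7 := ![(0, 1), (0, 6), (1, 6)]

/-!
The ten forms are `su(2)`-invariant: the derivation acts on a decomposable form `elem v` factor
by factor, and the resulting terms cancel. They are dual to evaluation at ten coordinate triples,
hence linearly independent. Conversely, an invariant alternating `3`-form vanishing at those ten
triples vanishes on every other increasing triple, because there its value is, up to sign, the
only surviving term of `A₁·S` or `A₂·S` at a triple obtained by rotating one entry. So evaluation
embeds the invariant space into `ℝ¹⁰`, and the span of the ten forms fills it.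
-/

section Alternating

variable {n k : ℕ} {T : Tensor n k}

theorem IsAlt.apply_eq_zero_of_not_injective (hT : IsAlt T) {f : Fin k → Fin n}
    (hf : ¬ Function.Injective f) : T f = 0 := by
  obtain ⟨i, j, hij, hne⟩ : ∃ i j, f i = f j ∧ i ≠ j := by
    simpa [Function.Injective] using hf
  have hswap : f ∘ Equiv.swap i j = f := by
    rw [Equiv.comp_swap_eq_update, hij, Function.update_eq_self, ← hij, Function.update_eq_self]
  have h := hT f (Equiv.swap i j)
  rw [hswap, Equiv.Perm.sign_swap hne] at h
  push_cast at h
  linarith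

theorem IsAlt.eq_zero_of_forall_strictMono (hT : IsAlt T)
    (h : ∀ f : Fin k → Fin n, StrictMono f → T f = 0) : T = 0 := by
  funext f
  show T f = 0
  by_cases hf : Function.Injective f
  · have hmono : StrictMono (f ∘ Tuple.sort f) :=
      (Tuple.monotone_sort f).strictMono_of_injective (hf.comp (Tuple.sort f).injective)
    have h' := hT f (Tuple.sort f)
    rw [h _ hmono] at h'
    refine (mul_eq_zero.1 h'.symm).resolve_left ?_
    rcases Int.units_eq_one_or (Equiv.Perm.sign (Tuple.sort f)) with hs | hs <;> simp [hs]
  · exact hT.apply_eq_zero_of_not_injective hf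

def alternatingSubmodule (n k : ℕ) : Submodule ℝ (Tensor n k) where
  carrier := {T | IsAlt T}
  add_mem' hS hT f σ := by simp only [Pi.add_apply, hS f σ, hT f σ]; ring
  zero_mem' f σ := by simp
  smul_mem' c T hT f σ := by simp only [Pi.smul_apply, smul_eq_mul, hT f σ]; ring

theorem mem_alternatingSubmodule : T ∈ alternatingSubmodule n k ↔ IsAlt T :=
  Iff.rfl

end Alternating

section Triple

theorem update_triple_zero {α : Type*} (x y z r : α) :
    Function.update ![x, y, z] 0 r = ![r, y, z] := by
  funext i; fin_cases i <;> rfl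

theorem update_triple_one {α : Type*} (x y z r : α) :
    Function.update ![x, y, z] 1 r = ![x, r, z] := by
  funext i; fin_cases i <;> rfl

theorem update_triple_two {α : Type*} (x y z r : α) :
    Function.update ![x, y, z] 2 r = ![x, y, r] := by
  funext i; fin_cases i <;> rfl

variable {n : ℕ} {T : Tensor n 3}

theorem IsAlt.apply_swap01 (hT : IsAlt T) (x y z : Fin n) : T ![y, x, z] = -T ![x, y, z] := by
  have hc : ![x, y, z] ∘ Equiv.swap 0 1 = ![y, x, z] := by
    funext i; fin_cases i <;> rfl
  simpa [hc] using hT ![x, y, z] (Equiv.swap 0 1)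

theorem IsAlt.apply_swap12 (hT : IsAlt T) (x y z : Fin n) : T ![x, z, y] = -T ![x, y, z] := by
  have hc : ![x, y, z] ∘ Equiv.swap 1 2 = ![x, z, y] := by
    funext i; fin_cases i <;> rfl
  simpa [hc] using hT ![x, y, z] (Equiv.swap 1 2)

theorem IsAlt.apply_self01 (hT : IsAlt T) (x z : Fin n) : T ![x, x, z] = 0 := by
  linarith [hT.apply_swap01 x x z]

theorem IsAlt.apply_self12 (hT : IsAlt T) (x y : Fin n) : T ![x, y, y] = 0 := by
  linarith [hT.apply_swap12 x y y]

end Triple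

section Derivation

variable {n k : ℕ}

theorem der_add_left (M N : Matrix (Fin n) (Fin n) ℝ) (T : Tensor n k) :
    der (M + N) T = der M T + der N T := by
  funext f
  simp only [der, Matrix.add_apply, add_mul, Finset.sum_add_distrib, Pi.add_apply, neg_add]

theorem der_sub_left (M N : Matrix (Fin n) (Fin n) ℝ) (T : Tensor n k) :
    der (M - N) T = der M T - der N T := by
  funext f
  simp only [der, Matrix.sub_apply, sub_mul, Finset.sum_sub_distrib, Pi.sub_apply]
  ring

noncomputable def derLinear (M : Matrix (Fin n) (Fin n) ℝ) : Tensor n k →ₗ[ℝ] Tensor n k where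
  toFun := der M
  map_add' S T := by
    funext f
    simp only [der, Pi.add_apply, mul_add, Finset.sum_add_distrib]
    ring
  map_smul' c T := by
    funext f
    simp [der, Finset.mul_sum, mul_left_comm]

theorem der_add (M : Matrix (Fin n) (Fin n) ℝ) (S T : Tensor n k) :
    der M (S + T) = der M S + der M T :=
  (derLinear M).map_add S T

theorem der_sub (M : Matrix (Fin n) (Fin n) ℝ) (S T : Tensor n k) :
    der M (S - T) = der M S - der M T :=
  (derLinear M).map_sub S T

theorem der_hat2_apply (a b : Fin 7) (T : Tensor 7 k) (f : Fin k → Fin 7) :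
    der (hat2 a b) T f = ∑ j, ((if f j = b then T (Function.update f j a) else 0)
      - if f j = a then T (Function.update f j b) else 0) := by
  simp only [der, hat2, Matrix.sub_apply, Matrix.single_apply, sub_mul, ite_mul, one_mul,
    zero_mul, ite_and, Finset.sum_sub_distrib, Finset.sum_ite_eq, Finset.mem_univ, if_true]
  simp only [eq_comm (a := f _), neg_sub]

end Derivation

section Elem

variable {n k : ℕ}

theorem det_updateCol_eq_sum_mul_adjugate {m : Type*} [Fintype m] [DecidableEq m]
    (M : Matrix m m ℝ) (j : m) (c : m → ℝ) :
    (M.updateCol j c).det = ∑ i, c i * M.adjugate j i := by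
  rw [← cramer_apply, cramer_eq_adjugate_mulVec, mulVec, dotProduct]
  simp only [mul_comm]

theorem det_updateRow_eq_sum_mul_adjugate {m : Type*} [Fintype m] [DecidableEq m]
    (M : Matrix m m ℝ) (i : m) (r : m → ℝ) :
    (M.updateRow i r).det = ∑ j, r j * M.adjugate j i := by
  rw [← det_transpose, ← updateCol_transpose, det_updateCol_eq_sum_mul_adjugate,
    ← adjugate_transpose]
  rfl

theorem elem_apply_update (v f : Fin k → Fin n) (j : Fin k) (r : Fin n) :
    elem v (Function.update f j r) = ∑ i, (if v i = r then 1 else 0) *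
      (Matrix.of fun i l => if v i = f l then (1 : ℝ) else 0).adjugate j i := by
  rw [elem, ← det_updateCol_eq_sum_mul_adjugate]
  congr 1
  ext i l
  by_cases h : l = j <;> simp [h]

theorem elem_update_apply (v f : Fin k → Fin n) (i : Fin k) (r : Fin n) :
    elem (Function.update v i r) f = ∑ j, (if f j = r then 1 else 0) *
      (Matrix.of fun i l => if v i = f l then (1 : ℝ) else 0).adjugate j i := by
  rw [elem, ← det_updateRow_eq_sum_mul_adjugate]
  congr 1
  ext i' l
  by_cases h : i' = i <;> simp [h, Matrix.updateRow_apply, eq_comm]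

-- Both sides expand, by cofactors of the same matrix, into one double sum.
theorem der_hat2_elem (a b : Fin 7) (v : Fin k → Fin 7) :
    der (hat2 a b) (elem v) = ∑ i, ((if v i = a then elem (Function.update v i b) else 0)
      - if v i = b then elem (Function.update v i a) else 0) := by
  funext f
  simp only [der_hat2_apply, elem_apply_update, elem_update_apply, Finset.sum_apply,
    Pi.sub_apply, apply_ite (fun T : Tensor 7 k => T f), Pi.zero_apply]
  generalize (Matrix.of fun i l => if v i = f l then (1 : ℝ) else 0).adjugate = c
  simp only [Finset.ite_sum_zero, ← Finset.sum_sub_distrib]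
  rw [Finset.sum_comm]
  refine Finset.sum_congr rfl fun i _ => Finset.sum_congr rfl fun j _ => ?_
  split_ifs <;> ring

theorem isAlt_elem (v : Fin k → Fin n) : IsAlt (elem v) := fun f σ =>
  Matrix.det_permute' σ (Matrix.of fun i l => if v i = f l then (1 : ℝ) else 0)

theorem elem_comp_perm (v : Fin k → Fin n) (σ : Equiv.Perm (Fin k)) :
    elem (v ∘ σ) = ((Equiv.Perm.sign σ : ℤ) : ℝ) • elem v :=
  funext fun f => Matrix.det_permute σ (Matrix.of fun i l => if v i = f l then (1 : ℝ) else 0)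

theorem elem_swap01 (x y z : Fin n) : elem ![y, x, z] = -elem ![x, y, z] := by
  have hc : ![x, y, z] ∘ Equiv.swap 0 1 = ![y, x, z] := by
    funext i; fin_cases i <;> rfl
  rw [← hc, elem_comp_perm, Equiv.Perm.sign_swap (by decide)]
  simp

theorem elem_swap12 (x y z : Fin n) : elem ![x, z, y] = -elem ![x, y, z] := by
  have hc : ![x, y, z] ∘ Equiv.swap 1 2 = ![x, z, y] := by
    funext i; fin_cases i <;> rfl
  rw [← hc, elem_comp_perm, Equiv.Perm.sign_swap (by decide)]
  simp

theorem elem_self01 (x z : Fin n) : elem ![x, x, z] = 0 :=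
  funext fun _ => Matrix.det_zero_of_row_eq (i := 0) (j := 1) (by decide) rfl

theorem elem_self12 (x y : Fin n) : elem ![x, y, y] = 0 :=
  funext fun _ => Matrix.det_zero_of_row_eq (i := 1) (j := 2) (by decide) rfl

theorem wedge_add (X : Fin n → ℝ) (ω ω' : Tensor n k) :
    wedge X (ω + ω') = wedge X ω + wedge X ω' := by
  funext f
  simp [wedge, mul_add, Finset.sum_add_distrib]

theorem wedge_sub (X : Fin n → ℝ) (ω ω' : Tensor n k) :
    wedge X (ω - ω') = wedge X ω - wedge X ω' := by
  funext f
  simp [wedge, mul_sub, Finset.sum_sub_distrib]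

theorem wedge_single_elem (a : Fin n) (v : Fin k → Fin n) :
    wedge (Pi.single a 1) (elem v) = elem (Matrix.vecCons a v) := by
  funext f
  rw [elem, Matrix.det_succ_row_zero]
  refine Finset.sum_congr rfl fun j _ => ?_
  simp [elem, Pi.single_apply, eq_comm, Matrix.submatrix]

end Elem

noncomputable def su2Invariant : Submodule ℝ (Tensor 7 3) :=
  alternatingSubmodule 7 3 ⊓ LinearMap.ker (derLinear A1) ⊓ LinearMap.ker (derLinear A2) ⊓
    LinearMap.ker (derLinear A3)

theorem mem_su2Invariant {T : Tensor 7 3} :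
    T ∈ su2Invariant ↔ IsAlt T ∧ der A1 T = 0 ∧ der A2 T = 0 ∧ der A3 T = 0 := by
  simp only [su2Invariant, Submodule.mem_inf, LinearMap.mem_ker, mem_alternatingSubmodule,
    and_assoc]
  rfl

abbrev GenIndex : Type := Unit ⊕ Fin 3 × Fin 3

noncomputable def su2Gen : GenIndex → Tensor 7 3 :=
  Sum.elim (fun _ => elem ![0, 1, 6]) fun x => wedge (E7 (idx x.1)) (de x.2)

theorem range_su2Gen :
    Set.range su2Gen = {elem ![0, 1, 6]} ∪
      Set.range fun x : Fin 3 × Fin 3 => wedge (E7 (idx x.1)) (de x.2) := by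
  rw [su2Gen, Set.Sum.elim_range, Set.range_const]

theorem isAlt_su2Gen (t : GenIndex) : IsAlt (su2Gen t) := by
  rcases t with _ | ⟨i, j⟩
  · exact isAlt_elem _
  · rw [← mem_alternatingSubmodule]
    fin_cases j <;>
      simp only [su2Gen, Fin.isValue, E7, de, Fin.zero_eta, Fin.mk_one, Fin.reduceFinMk,
        Sum.elim_inr, cons_val_zero, cons_val_one, cons_val, wedge_add, wedge_sub,
        wedge_single_elem]
    · exact add_mem (isAlt_elem _) (isAlt_elem _)
    · exact sub_mem (isAlt_elem _) (isAlt_elem _)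
    · exact sub_mem (isAlt_elem _) (isAlt_elem _)

theorem der_su2Gen (t : GenIndex) :
    der A1 (su2Gen t) = 0 ∧ der A2 (su2Gen t) = 0 ∧ der A3 (su2Gen t) = 0 := by
  -- the order hypotheses only keep `simp` from looping
  have sort01 : ∀ x y z : Fin 7, y < x → elem ![x, y, z] = -elem ![y, x, z] :=
    fun x y z _ => by rw [elem_swap01 y x z]
  have sort12 : ∀ x y z : Fin 7, z < y → elem ![x, y, z] = -elem ![x, z, y] :=
    fun x y z _ => by rw [elem_swap12 x z y]
  rcases t with _ | ⟨i, j⟩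
  · simp [su2Gen, A1, A2, A3, der_add_left, der_sub_left, der_hat2_elem, Fin.sum_univ_three]
  · fin_cases i <;> fin_cases j <;> refine ⟨?_, ?_, ?_⟩ <;>
    simp [su2Gen, de, idx, E7, wedge_add, wedge_sub, wedge_single_elem, A1, A2, A3, der_add_left,
      der_sub_left, der_add, der_sub, der_hat2_elem, Fin.sum_univ_three, update_triple_zero,
      update_triple_one, update_triple_two, sort01, sort12, elem_self01, elem_self12] <;> abel

theorem span_su2Gen_le : Submodule.span ℝ (Set.range su2Gen) ≤ su2Invariant := by
  rw [Submodule.span_le]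
  rintro _ ⟨t, rfl⟩
  exact mem_su2Invariant.2 ⟨isAlt_su2Gen t, der_su2Gen t⟩

def deLeadingPair : Fin 3 → Fin 2 → Fin 7 := ![![2, 4], ![3, 4], ![2, 3]]

def su2Probe : GenIndex → Fin 3 → Fin 7 :=
  Sum.elim (fun _ => ![0, 1, 6]) fun x => Matrix.vecCons (idx x.1) (deLeadingPair x.2)

theorem su2Gen_apply_su2Probe (s t : GenIndex) :
    su2Gen t (su2Probe s) = if s = t then 1 else 0 := by
  rcases s with _ | ⟨i, j⟩ <;> rcases t with _ | ⟨i', j'⟩ <;>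
    [skip; fin_cases i' <;> fin_cases j'; fin_cases i <;> fin_cases j;
      fin_cases i <;> fin_cases j <;> fin_cases i' <;> fin_cases j'] <;>
    simp [su2Gen, su2Probe, de, idx, deLeadingPair, E7, wedge_add, wedge_sub, wedge_single_elem,
      elem, Matrix.det_fin_three]

noncomputable def evalSu2Probe : Tensor 7 3 →ₗ[ℝ] GenIndex → ℝ :=
  LinearMap.pi fun s => LinearMap.proj (su2Probe s)

theorem linearIndependent_su2Gen : LinearIndependent ℝ su2Gen := by
  refine LinearIndependent.of_comp evalSu2Probe ?_
  convert (Pi.basisFun ℝ GenIndex).linearIndependent using 1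
  funext t s
  simp [evalSu2Probe, su2Gen_apply_su2Probe, Pi.single_apply]

-- `A₁` and `A₂` send `e_x` to `±e_{pairA1 x}` and `±e_{pairA2 x}` respectively, or to `0`.
def pairA1 : Fin 7 → Fin 7 := ![0, 1, 3, 2, 5, 4, 6]

def pairA2 : Fin 7 → Fin 7 := ![0, 1, 4, 5, 2, 3, 6]

set_option maxHeartbeats 1000000 in
theorem eq_zero_of_apply_su2Probe_eq_zero {S : Tensor 7 3} (hS : IsAlt S) (h1 : der A1 S = 0)
    (h2 : der A2 S = 0) (hp : ∀ s, S (su2Probe s) = 0) : S = 0 := by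
  -- the order hypotheses only keep `simp` from looping
  have sort01 : ∀ x y z : Fin 7, y < x → S ![x, y, z] = -S ![y, x, z] :=
    fun x y z _ => by rw [hS.apply_swap01 y x z]
  have sort12 : ∀ x y z : Fin 7, z < y → S ![x, y, z] = -S ![x, z, y] :=
    fun x y z _ => by rw [hS.apply_swap12 x z y]
  simp only [Sum.forall, Prod.forall, Fin.forall_fin_succ, su2Probe, idx, deLeadingPair,
    Fin.isValue, Sum.elim_inl, forall_const, Sum.elim_inr, cons_val_zero, cons_val_succ,
    cons_val_fin_one, Fin.reduceLT, sort01, sort12, neg_neg] at hp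
  refine hS.eq_zero_of_forall_strictMono fun f hf => ?_
  obtain ⟨x, y, z, rfl⟩ : ∃ x y z, f = ![x, y, z] :=
    ⟨f 0, f 1, f 2, by funext i; fin_cases i <;> rfl⟩
  have hxy : x < y := hf (by decide : (0 : Fin 3) < 1)
  have hyz : y < z := hf (by decide : (1 : Fin 3) < 2)
  have h10 := congrFun h1 ![pairA1 x, y, z]
  have h11 := congrFun h1 ![x, pairA1 y, z]
  have h12 := congrFun h1 ![x, y, pairA1 z]
  have h20 := congrFun h2 ![pairA2 x, y, z]
  have h21 := congrFun h2 ![x, pairA2 y, z]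
  have h22 := congrFun h2 ![x, y, pairA2 z]
  clear hf h1 h2
  fin_cases x <;> fin_cases y <;> fin_cases z <;> simp at hxy hyz <;>
    simp [pairA1, pairA2, A1, A2, der_add_left, der_sub_left, der_hat2_apply, Fin.sum_univ_three,
      update_triple_zero, update_triple_one, update_triple_two, sort01, sort12,
      hS.apply_self01, hS.apply_self12, hp] at h10 h11 h12 h20 h21 h22 ⊢ <;> linarith

theorem finrank_su2Invariant_le : Module.finrank ℝ su2Invariant ≤ 10 := by
  have hinj : Function.Injective (evalSu2Probe ∘ₗ su2Invariant.subtype) := by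
    refine (injective_iff_map_eq_zero _).2 fun ⟨S, hS⟩ hS0 => ?_
    obtain ⟨hSalt, h1, h2, -⟩ := mem_su2Invariant.1 hS
    exact Subtype.ext (eq_zero_of_apply_su2Probe_eq_zero hSalt h1 h2 (congrFun hS0))
  simpa using LinearMap.finrank_le_finrank_of_injective hinj

/-- The space of alternating `3`-forms on `ℝ⁷` annihilated by the
derivation action of `A₁ = e₃₄+e₅₆`, `A₂ = e₃₅-e₄₆`, `A₃ = e₃₆+e₄₅` is exactly the
span of the nine forms `eᵢ ∧ deⱼ` (`i,j ∈ {1,2,7}`) together with `e₁∧e₂∧e₇`, and it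
has dimension exactly `10`. -/
theorem invariant_three_forms_dim_ten :
    {T : Tensor 7 3 | IsAlt T ∧ der A1 T = 0 ∧ der A2 T = 0 ∧ der A3 T = 0}
      = (Submodule.span ℝ
          ({elem ![0, 1, 6]} ∪
            Set.range fun x : Fin 3 × Fin 3 => wedge (E7 (idx x.1)) (de x.2)) :
          Set (Tensor 7 3)) ∧
    Module.finrank ℝ
      ↥(Submodule.span ℝ
          ({elem ![0, 1, 6]} ∪
            Set.range fun x : Fin 3 × Fin 3 => wedge (E7 (idx x.1)) (de x.2))) = 10 := by
  rw [← range_su2Gen]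
  have hrank : Module.finrank ℝ (Submodule.span ℝ (Set.range su2Gen)) = 10 :=
    finrank_span_eq_card linearIndependent_su2Gen
  have hspan : Submodule.span ℝ (Set.range su2Gen) = su2Invariant :=
    Submodule.eq_of_le_of_finrank_le span_su2Gen_le (hrank ▸ finrank_su2Invariant_le)
  refine ⟨?_, hrank⟩
  rw [hspan]
  exact Set.ext fun T => mem_su2Invariant.symm
end

section
/- Let λ, p, q ∈ ℝ, let T be an alternating 3-form and F an alternating 4-form on ℝⁿ, and let Ψ ∈ ℝᴺ be a spinor. If for every X ∈ ℝⁿ the algebraic Killing equation λ·γ(X)Ψ + (1/4)·ρ(X⌟T)Ψ + p·ρ(X⌟F)Ψ + q·ρ(X∧F)Ψ = 0 holds, then contracting over an orthonormal basis yields −n·λ·Ψ + (3/4)·ρ(T)Ψ + (4p − (n−4)q)·ρ(F)Ψ = 0. In particular, if 4p − (n−4)q = 0, the contracted equation involves only the torsion form T and not the flux form F. -/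
open Matrix

variable {n N : ℕ} {γ : Fin n → Matrix (Fin N) (Fin N) ℝ} {F : Tensor n 4}

theorem cliffsq (hγ : CliffordRel γ) (a : Fin n) : γ a * γ a = (-1 : ℝ) • 1 := by
  have h := hγ a a
  rw [if_pos rfl] at h
  have h2 : (2:ℝ) • (γ a * γ a) = (-2:ℝ) • 1 := by rw [two_smul]; exact h
  calc γ a * γ a = (2⁻¹ : ℝ) • ((2:ℝ) • (γ a * γ a)) := by rw [smul_smul]; norm_num
    _ = (-1 : ℝ) • 1 := by rw [h2, smul_smul]; norm_num

theorem move (hγ : CliffordRel γ) (x y : Fin n) (R : Matrix (Fin N) (Fin N) ℝ) :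
    γ x * (γ y * R) = (if x = y then (-2:ℝ) • R else 0) - γ y * (γ x * R) := by
  have h : γ x * γ y = (if x = y then (-2 : ℝ) • (1 : Matrix (Fin N) (Fin N) ℝ) else 0)
      - γ y * γ x := eq_sub_of_add_eq (hγ x y)
  rw [← mul_assoc, h, sub_mul, ← mul_assoc]
  congr 1
  split_ifs <;> simp [smul_mul_assoc]

theorem s01 (hF : IsAlt F) (a b c d : Fin n) : F ![b,a,c,d] = -F ![a,b,c,d] := by
  have h := hF ![a,b,c,d] (Equiv.swap 0 1)
  have e : (![a,b,c,d] : Fin 4 → Fin n) ∘ (Equiv.swap 0 1) = ![b,a,c,d] := by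
    funext i; fin_cases i <;> simp [Equiv.swap_apply_def]
  rw [e, Equiv.Perm.sign_swap (by decide)] at h
  rw [h]; norm_num

theorem s12 (hF : IsAlt F) (a b c d : Fin n) : F ![a,c,b,d] = -F ![a,b,c,d] := by
  have h := hF ![a,b,c,d] (Equiv.swap 1 2)
  have e : (![a,b,c,d] : Fin 4 → Fin n) ∘ (Equiv.swap 1 2) = ![a,c,b,d] := by
    funext i; fin_cases i <;> simp [Equiv.swap_apply_def]
  rw [e, Equiv.Perm.sign_swap (by decide)] at h
  rw [h]; norm_num

theorem s23 (hF : IsAlt F) (a b c d : Fin n) : F ![a,b,d,c] = -F ![a,b,c,d] := by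
  have h := hF ![a,b,c,d] (Equiv.swap 2 3)
  have e : (![a,b,c,d] : Fin 4 → Fin n) ∘ (Equiv.swap 2 3) = ![a,b,d,c] := by
    funext i; fin_cases i <;> simp [Equiv.swap_apply_def]
  rw [e, Equiv.Perm.sign_swap (by decide)] at h
  rw [h]; norm_num

theorem cyc3 (hF : IsAlt F) (a b c d : Fin n) : F ![b,c,a,d] = F ![a,b,c,d] := by
  rw [s12 hF b a c d, s01 hF a b c d, neg_neg]

theorem cyc4 (hF : IsAlt F) (a b c d : Fin n) : F ![b,c,d,a] = -F ![a,b,c,d] := by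
  rw [s23 hF b c a d, cyc3 hF a b c d]

/-- the basic quadruple sum -/
noncomputable def S4 (γ : Fin n → Matrix (Fin N) (Fin N) ℝ) (F : Tensor n 4) :
    Matrix (Fin N) (Fin N) ℝ :=
  ∑ a, ∑ b, ∑ c, ∑ d, F ![a,b,c,d] • (γ a * (γ b * (γ c * γ d)))

section sums
variable {M : Type*} [AddCommMonoid M]

theorem sum4_congr (f g : Fin n → Fin n → Fin n → Fin n → M)
    (h : ∀ a b c d, f a b c d = g a b c d) :
    (∑ a, ∑ b, ∑ c, ∑ d, f a b c d) = ∑ a, ∑ b, ∑ c, ∑ d, g a b c d := by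
  simp only [h]

theorem sum5_congr (f g : Fin n → Fin n → Fin n → Fin n → Fin n → M)
    (h : ∀ a b c d e, f a b c d e = g a b c d e) :
    (∑ a, ∑ b, ∑ c, ∑ d, ∑ e, f a b c d e) = ∑ a, ∑ b, ∑ c, ∑ d, ∑ e, g a b c d e := by
  simp only [h]

theorem sum4_comm12 (f : Fin n → Fin n → Fin n → Fin n → M) :
    (∑ a, ∑ b, ∑ c, ∑ d, f a b c d) = ∑ b, ∑ a, ∑ c, ∑ d, f a b c d := Finset.sum_comm

theorem sum4_comm23 (f : Fin n → Fin n → Fin n → Fin n → M) :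
    (∑ a, ∑ b, ∑ c, ∑ d, f a b c d) = ∑ a, ∑ c, ∑ b, ∑ d, f a b c d :=
  Finset.sum_congr rfl fun _ _ => Finset.sum_comm

theorem sum4_comm34 (f : Fin n → Fin n → Fin n → Fin n → M) :
    (∑ a, ∑ b, ∑ c, ∑ d, f a b c d) = ∑ a, ∑ b, ∑ d, ∑ c, f a b c d :=
  Finset.sum_congr rfl fun _ _ => Finset.sum_congr rfl fun _ _ => Finset.sum_comm

theorem sum5_comm12 (f : Fin n → Fin n → Fin n → Fin n → Fin n → M) :
    (∑ a, ∑ b, ∑ c, ∑ d, ∑ e, f a b c d e) = ∑ b, ∑ a, ∑ c, ∑ d, ∑ e, f a b c d e :=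
  Finset.sum_comm

theorem sum5_comm23 (f : Fin n → Fin n → Fin n → Fin n → Fin n → M) :
    (∑ a, ∑ b, ∑ c, ∑ d, ∑ e, f a b c d e) = ∑ a, ∑ c, ∑ b, ∑ d, ∑ e, f a b c d e :=
  Finset.sum_congr rfl fun _ _ => Finset.sum_comm

theorem sum5_comm34 (f : Fin n → Fin n → Fin n → Fin n → Fin n → M) :
    (∑ a, ∑ b, ∑ c, ∑ d, ∑ e, f a b c d e) = ∑ a, ∑ b, ∑ d, ∑ c, ∑ e, f a b c d e :=
  Finset.sum_congr rfl fun _ _ => Finset.sum_congr rfl fun _ _ => Finset.sum_comm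

theorem sum5_comm45 (f : Fin n → Fin n → Fin n → Fin n → Fin n → M) :
    (∑ a, ∑ b, ∑ c, ∑ d, ∑ e, f a b c d e) = ∑ a, ∑ b, ∑ c, ∑ e, ∑ d, f a b c d e :=
  Finset.sum_congr rfl fun _ _ => Finset.sum_congr rfl fun _ _ =>
    Finset.sum_congr rfl fun _ _ => Finset.sum_comm

end sums

theorem W0 (hγ : CliffordRel γ) (F : Tensor n 4) :
    (∑ x0 : Fin n, ∑ x1 : Fin n, ∑ x2 : Fin n, ∑ x3 : Fin n, ∑ x4 : Fin n,
      F ![x1,x2,x3,x4] • (γ x0 * (γ x0 * (γ x1 * (γ x2 * (γ x3 * γ x4))))))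
      = (-(n:ℝ)) • S4 γ F := by
  have key : ∀ (x0 : Fin n) (Z : Matrix (Fin N) (Fin N) ℝ), γ x0 * (γ x0 * Z) = -Z := by
    intro x0 Z; rw [← mul_assoc, cliffsq hγ]; simp
  have inner : ∀ x0 : Fin n,
      (∑ x1 : Fin n, ∑ x2 : Fin n, ∑ x3 : Fin n, ∑ x4 : Fin n,
        F ![x1,x2,x3,x4] • (γ x0 * (γ x0 * (γ x1 * (γ x2 * (γ x3 * γ x4))))))
        = -S4 γ F := by
    intro x0
    rw [S4]
    simp only [key, smul_neg, ← Finset.sum_neg_distrib]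
  rw [Finset.sum_congr rfl fun x0 _ => inner x0, Finset.sum_const, Finset.card_univ,
    Fintype.card_fin, ← Nat.cast_smul_eq_nsmul (R := ℝ), smul_neg, ← neg_smul]

theorem W1 (hγ : CliffordRel γ) (F : Tensor n 4) :
    (∑ x0 : Fin n, ∑ x1 : Fin n, ∑ x2 : Fin n, ∑ x3 : Fin n, ∑ x4 : Fin n,
      F ![x0,x2,x3,x4] • (γ x1 * (γ x0 * (γ x1 * (γ x2 * (γ x3 * γ x4))))))
      = ((n:ℝ) - 2) • S4 γ F := by
  have hbody : ∀ x0 x1 x2 x3 x4 : Fin n,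
      F ![x0,x2,x3,x4] • (γ x1 * (γ x0 * (γ x1 * (γ x2 * (γ x3 * γ x4)))))
      = (if x0 = x1 then (-2:ℝ) • (F ![x0,x2,x3,x4] • (γ x1 * (γ x2 * (γ x3 * γ x4)))) else 0)
        - F ![x0,x2,x3,x4] • (γ x1 * (γ x1 * (γ x0 * (γ x2 * (γ x3 * γ x4))))) := by
    intro x0 x1 x2 x3 x4
    rw [move hγ x0 x1 (γ x2 * (γ x3 * γ x4)), mul_sub, smul_sub]
    congr 1
    split_ifs with h
    · rw [mul_smul_comm, smul_comm]
    · simp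
  rw [sum5_congr _ _ hbody]
  simp only [Finset.sum_sub_distrib]
  have hA : (∑ x0 : Fin n, ∑ x1 : Fin n, ∑ x2 : Fin n, ∑ x3 : Fin n, ∑ x4 : Fin n,
      if x0 = x1 then (-2:ℝ) • (F ![x0,x2,x3,x4] • (γ x1 * (γ x2 * (γ x3 * γ x4)))) else 0)
      = (-2:ℝ) • S4 γ F := by
    simp only [Finset.sum_ite_irrel, Finset.sum_const_zero, Finset.sum_ite_eq,
      Finset.mem_univ, if_true]
    rw [S4]
    simp only [← Finset.smul_sum]
  have hB : (∑ x0 : Fin n, ∑ x1 : Fin n, ∑ x2 : Fin n, ∑ x3 : Fin n, ∑ x4 : Fin n,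
      F ![x0,x2,x3,x4] • (γ x1 * (γ x1 * (γ x0 * (γ x2 * (γ x3 * γ x4))))))
      = (-(n:ℝ)) • S4 γ F := by
    rw [sum5_comm12]; exact W0 hγ F
  rw [hA, hB, ← sub_smul]
  ring_nf

theorem sum4_rot3 {M : Type*} [AddCommMonoid M] (f : Fin n → Fin n → Fin n → Fin n → M) :
    (∑ a, ∑ b, ∑ c, ∑ d, f a b c d) = ∑ c, ∑ a, ∑ b, ∑ d, f a b c d :=
  (sum4_comm23 f).trans (sum4_comm12 fun a c b d => f a b c d)

theorem sum4_rot4 {M : Type*} [AddCommMonoid M] (f : Fin n → Fin n → Fin n → Fin n → M) :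
    (∑ a, ∑ b, ∑ c, ∑ d, f a b c d) = ∑ d, ∑ a, ∑ b, ∑ c, f a b c d :=
  ((sum4_comm34 f).trans (sum4_comm23 fun a b d c => f a b c d)).trans
    (sum4_comm12 fun a d b c => f a b c d)

theorem W2 (hγ : CliffordRel γ) (hF : IsAlt F) :
    (∑ x0 : Fin n, ∑ x1 : Fin n, ∑ x2 : Fin n, ∑ x3 : Fin n, ∑ x4 : Fin n,
      F ![x0,x1,x3,x4] • (γ x2 * (γ x0 * (γ x1 * (γ x2 * (γ x3 * γ x4))))))
      = ((4:ℝ) - n) • S4 γ F := by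
  have hbody : ∀ x0 x1 x2 x3 x4 : Fin n,
      F ![x0,x1,x3,x4] • (γ x2 * (γ x0 * (γ x1 * (γ x2 * (γ x3 * γ x4)))))
      = (if x1 = x2 then
          (-2:ℝ) • (F ![x0,x1,x3,x4] • (γ x2 * (γ x0 * (γ x3 * γ x4)))) else 0)
        - F ![x0,x1,x3,x4] • (γ x2 * (γ x0 * (γ x2 * (γ x1 * (γ x3 * γ x4))))) := by
    intro x0 x1 x2 x3 x4
    rw [move hγ x1 x2 (γ x3 * γ x4), mul_sub (γ x0), mul_sub (γ x2), smul_sub]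
    congr 1
    split_ifs with h
    · rw [mul_smul_comm, mul_smul_comm, smul_comm]
    · simp
  rw [sum5_congr _ _ hbody]
  simp only [Finset.sum_sub_distrib]
  have hA : (∑ x0 : Fin n, ∑ x1 : Fin n, ∑ x2 : Fin n, ∑ x3 : Fin n, ∑ x4 : Fin n,
      if x1 = x2 then
        (-2:ℝ) • (F ![x0,x1,x3,x4] • (γ x2 * (γ x0 * (γ x3 * γ x4)))) else 0)
      = (2:ℝ) • S4 γ F := by
    simp only [Finset.sum_ite_irrel, Finset.sum_const_zero, Finset.sum_ite_eq,
      Finset.mem_univ, if_true]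
    have point : ∀ a b c d : Fin n,
        (-2:ℝ) • (F ![a,b,c,d] • (γ b * (γ a * (γ c * γ d))))
        = (2:ℝ) • (F ![b,a,c,d] • (γ b * (γ a * (γ c * γ d)))) := by
      intro a b c d
      rw [s01 hF b a c d]
      module
    rw [sum4_congr _ _ point]
    simp only [← Finset.smul_sum]
    rw [S4, sum4_comm12 (fun a b c d => F ![b,a,c,d] • (γ b * (γ a * (γ c * γ d))))]
  have hB : (∑ x0 : Fin n, ∑ x1 : Fin n, ∑ x2 : Fin n, ∑ x3 : Fin n, ∑ x4 : Fin n,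
      F ![x0,x1,x3,x4] • (γ x2 * (γ x0 * (γ x2 * (γ x1 * (γ x3 * γ x4))))))
      = ((n:ℝ) - 2) • S4 γ F := by
    rw [sum5_comm23]; exact W1 hγ F
  rw [hA, hB, ← sub_smul]
  ring_nf

theorem W3 (hγ : CliffordRel γ) (hF : IsAlt F) :
    (∑ x0 : Fin n, ∑ x1 : Fin n, ∑ x2 : Fin n, ∑ x3 : Fin n, ∑ x4 : Fin n,
      F ![x0,x1,x2,x4] • (γ x3 * (γ x0 * (γ x1 * (γ x2 * (γ x3 * γ x4))))))
      = ((n:ℝ) - 6) • S4 γ F := by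
  have hbody : ∀ x0 x1 x2 x3 x4 : Fin n,
      F ![x0,x1,x2,x4] • (γ x3 * (γ x0 * (γ x1 * (γ x2 * (γ x3 * γ x4)))))
      = (if x2 = x3 then
          (-2:ℝ) • (F ![x0,x1,x2,x4] • (γ x3 * (γ x0 * (γ x1 * γ x4)))) else 0)
        - F ![x0,x1,x2,x4] • (γ x3 * (γ x0 * (γ x1 * (γ x3 * (γ x2 * γ x4))))) := by
    intro x0 x1 x2 x3 x4
    rw [move hγ x2 x3 (γ x4), mul_sub (γ x1), mul_sub (γ x0), mul_sub (γ x3), smul_sub]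
    congr 1
    split_ifs with h
    · rw [mul_smul_comm, mul_smul_comm, mul_smul_comm, smul_comm]
    · simp
  rw [sum5_congr _ _ hbody]
  simp only [Finset.sum_sub_distrib]
  have hA : (∑ x0 : Fin n, ∑ x1 : Fin n, ∑ x2 : Fin n, ∑ x3 : Fin n, ∑ x4 : Fin n,
      if x2 = x3 then
        (-2:ℝ) • (F ![x0,x1,x2,x4] • (γ x3 * (γ x0 * (γ x1 * γ x4)))) else 0)
      = (-2:ℝ) • S4 γ F := by
    simp only [Finset.sum_ite_irrel, Finset.sum_const_zero, Finset.sum_ite_eq,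
      Finset.mem_univ, if_true]
    have point : ∀ a b c d : Fin n,
        (-2:ℝ) • (F ![a,b,c,d] • (γ c * (γ a * (γ b * γ d))))
        = (-2:ℝ) • (F ![c,a,b,d] • (γ c * (γ a * (γ b * γ d)))) := by
      intro a b c d
      rw [cyc3 hF c a b d]
    rw [sum4_congr _ _ point]
    simp only [← Finset.smul_sum]
    rw [S4, sum4_rot3 (fun a b c d => F ![c,a,b,d] • (γ c * (γ a * (γ b * γ d))))]
  have hB : (∑ x0 : Fin n, ∑ x1 : Fin n, ∑ x2 : Fin n, ∑ x3 : Fin n, ∑ x4 : Fin n,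
      F ![x0,x1,x2,x4] • (γ x3 * (γ x0 * (γ x1 * (γ x3 * (γ x2 * γ x4))))))
      = ((4:ℝ) - n) • S4 γ F := by
    rw [sum5_comm34]; exact W2 hγ hF
  rw [hA, hB, ← sub_smul]
  ring_nf

theorem W4 (hγ : CliffordRel γ) (hF : IsAlt F) :
    (∑ x0 : Fin n, ∑ x1 : Fin n, ∑ x2 : Fin n, ∑ x3 : Fin n, ∑ x4 : Fin n,
      F ![x0,x1,x2,x3] • (γ x4 * (γ x0 * (γ x1 * (γ x2 * (γ x3 * γ x4))))))
      = ((8:ℝ) - n) • S4 γ F := by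
  have hbody : ∀ x0 x1 x2 x3 x4 : Fin n,
      F ![x0,x1,x2,x3] • (γ x4 * (γ x0 * (γ x1 * (γ x2 * (γ x3 * γ x4)))))
      = (if x3 = x4 then
          (-2:ℝ) • (F ![x0,x1,x2,x3] • (γ x4 * (γ x0 * (γ x1 * γ x2)))) else 0)
        - F ![x0,x1,x2,x3] • (γ x4 * (γ x0 * (γ x1 * (γ x2 * (γ x4 * γ x3))))) := by
    intro x0 x1 x2 x3 x4
    have h : γ x3 * γ x4 = (if x3 = x4 then (-2 : ℝ) • (1 : Matrix (Fin N) (Fin N) ℝ) else 0)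
        - γ x4 * γ x3 := eq_sub_of_add_eq (hγ x3 x4)
    rw [h, mul_sub (γ x2), mul_sub (γ x1), mul_sub (γ x0), mul_sub (γ x4), smul_sub]
    congr 1
    split_ifs with h'
    · rw [mul_smul_comm, mul_smul_comm, mul_smul_comm, mul_smul_comm, mul_one, smul_comm]
    · simp
  rw [sum5_congr _ _ hbody]
  simp only [Finset.sum_sub_distrib]
  have hA : (∑ x0 : Fin n, ∑ x1 : Fin n, ∑ x2 : Fin n, ∑ x3 : Fin n, ∑ x4 : Fin n,
      if x3 = x4 then
        (-2:ℝ) • (F ![x0,x1,x2,x3] • (γ x4 * (γ x0 * (γ x1 * γ x2)))) else 0)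
      = (2:ℝ) • S4 γ F := by
    simp only [Finset.sum_ite_irrel, Finset.sum_const_zero, Finset.sum_ite_eq,
      Finset.mem_univ, if_true]
    have point : ∀ a b c d : Fin n,
        (-2:ℝ) • (F ![a,b,c,d] • (γ d * (γ a * (γ b * γ c))))
        = (2:ℝ) • (F ![d,a,b,c] • (γ d * (γ a * (γ b * γ c)))) := by
      intro a b c d
      rw [cyc4 hF d a b c]
      module
    rw [sum4_congr _ _ point]
    simp only [← Finset.smul_sum]
    rw [S4, sum4_rot4 (fun a b c d => F ![d,a,b,c] • (γ d * (γ a * (γ b * γ c))))]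
  have hB : (∑ x0 : Fin n, ∑ x1 : Fin n, ∑ x2 : Fin n, ∑ x3 : Fin n, ∑ x4 : Fin n,
      F ![x0,x1,x2,x3] • (γ x4 * (γ x0 * (γ x1 * (γ x2 * (γ x4 * γ x3))))))
      = ((n:ℝ) - 6) • S4 γ F := by
    rw [sum5_comm45]; exact W3 hγ hF
  rw [hA, hB, ← sub_smul]
  ring_nf

theorem sum_pi_succ {α : Type} [Fintype α] {M : Type*} [AddCommMonoid M] {k : ℕ}
    (φ : (Fin (k+1) → α) → M) :
    ∑ f : Fin (k+1) → α, φ f = ∑ a : α, ∑ g : Fin k → α, φ (Fin.cons a g) := by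
  rw [← (Fintype.sum_equiv (Fin.consEquiv fun _ => α)
      (fun p => φ (Fin.cons p.1 p.2)) φ (fun p => by cases p; rfl))]
  exact Fintype.sum_prod_type (f := fun p => φ (Fin.cons p.1 p.2))

theorem sum_pi4 {M : Type*} [AddCommMonoid M] (φ : (Fin 4 → Fin n) → M) :
    ∑ f : Fin 4 → Fin n, φ f = ∑ a, ∑ b, ∑ c, ∑ d, φ ![a,b,c,d] := by
  rw [sum_pi_succ φ]
  refine Finset.sum_congr rfl fun a _ => ?_
  rw [sum_pi_succ (fun g => φ (Fin.cons a g))]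
  refine Finset.sum_congr rfl fun b _ => ?_
  rw [sum_pi_succ (fun g => φ (Fin.cons a (Fin.cons b g)))]
  refine Finset.sum_congr rfl fun c _ => ?_
  rw [sum_pi_succ (fun g => φ (Fin.cons a (Fin.cons b (Fin.cons c g))))]
  refine Finset.sum_congr rfl fun d _ => ?_
  have : ∀ g : Fin 0 → Fin n,
      (Fin.cons a (Fin.cons b (Fin.cons c (Fin.cons d g))) : Fin 4 → Fin n) = ![a,b,c,d] := by
    intro g; funext i; fin_cases i <;> rfl
  rw [Fintype.sum_subsingleton _ (Fin.elim0), this]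

theorem sum_pi5 {M : Type*} [AddCommMonoid M] (φ : (Fin 5 → Fin n) → M) :
    ∑ f : Fin 5 → Fin n, φ f = ∑ a, ∑ b, ∑ c, ∑ d, ∑ e, φ ![a,b,c,d,e] := by
  rw [sum_pi_succ φ]
  refine Finset.sum_congr rfl fun a _ => ?_
  rw [sum_pi4 (fun g => φ (Fin.cons a g))]
  rfl

theorem P4lit (a b c d : Fin n) :
    (List.ofFn fun i => γ ((![a,b,c,d] : Fin 4 → Fin n) i)).prod
      = γ a * (γ b * (γ c * γ d)) := by
  simp [List.ofFn_succ, mul_assoc]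

theorem P5lit (a b c d e : Fin n) :
    (List.ofFn fun i => γ ((![a,b,c,d,e] : Fin 5 → Fin n) i)).prod
      = γ a * (γ b * (γ c * (γ d * γ e))) := by
  simp [List.ofFn_succ, mul_assoc]

theorem sa0 (x0 x1 x2 x3 x4 : Fin n) :
    (fun t => (![x0,x1,x2,x3,x4] : Fin 5 → Fin n) ((0:Fin 5).succAbove t)) = ![x1,x2,x3,x4] := by
  funext t; fin_cases t <;> rfl

theorem sa1 (x0 x1 x2 x3 x4 : Fin n) :
    (fun t => (![x0,x1,x2,x3,x4] : Fin 5 → Fin n) ((1:Fin 5).succAbove t)) = ![x0,x2,x3,x4] := by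
  funext t; fin_cases t <;> rfl

theorem sa2 (x0 x1 x2 x3 x4 : Fin n) :
    (fun t => (![x0,x1,x2,x3,x4] : Fin 5 → Fin n) ((2:Fin 5).succAbove t)) = ![x0,x1,x3,x4] := by
  funext t; fin_cases t <;> rfl

theorem sa3 (x0 x1 x2 x3 x4 : Fin n) :
    (fun t => (![x0,x1,x2,x3,x4] : Fin 5 → Fin n) ((3:Fin 5).succAbove t)) = ![x0,x1,x2,x4] := by
  funext t; fin_cases t <;> rfl

theorem sa4 (x0 x1 x2 x3 x4 : Fin n) :
    (fun t => (![x0,x1,x2,x3,x4] : Fin 5 → Fin n) ((4:Fin 5).succAbove t)) = ![x0,x1,x2,x3] := by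
  funext t; fin_cases t <;> rfl


theorem rhoF_eq : rho γ F = (24:ℝ)⁻¹ • S4 γ F := by
  rw [rho, sum_pi4 (fun f => F f • (List.ofFn fun i => γ (f i)).prod)]
  have point : ∀ a b c d : Fin n,
      F ![a,b,c,d] • (List.ofFn fun i => γ ((![a,b,c,d] : Fin 4 → Fin n) i)).prod
      = F ![a,b,c,d] • (γ a * (γ b * (γ c * γ d))) := by
    intro a b c d; rw [P4lit]
  rw [sum4_congr _ _ point, S4]
  norm_num [Nat.factorial]

theorem t0 (hγ : CliffordRel γ) (hF : IsAlt F) :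
    (∑ f : Fin 5 → Fin n, ((-1:ℝ)^(((0:Fin 5)):ℕ) * F fun t => f ((0:Fin 5).succAbove t)) •
      (γ (f 0) * (List.ofFn fun t => γ (f t)).prod)) = (-(n:ℝ)) • S4 γ F := by
  rw [sum_pi5]
  have point : ∀ x0 x1 x2 x3 x4 : Fin n,
      ((-1:ℝ)^(((0:Fin 5)):ℕ) * F fun t => (![x0,x1,x2,x3,x4] : Fin 5 → Fin n) ((0:Fin 5).succAbove t)) •
        (γ ((![x0,x1,x2,x3,x4] : Fin 5 → Fin n) 0) *
          (List.ofFn fun t => γ ((![x0,x1,x2,x3,x4] : Fin 5 → Fin n) t)).prod)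
      = F ![x1,x2,x3,x4] • (γ x0 * (γ x0 * (γ x1 * (γ x2 * (γ x3 * γ x4))))) := by
    intro x0 x1 x2 x3 x4
    rw [P5lit, sa0, show (![x0,x1,x2,x3,x4] : Fin 5 → Fin n) 0 = x0 from rfl,
      show (((0:Fin 5)):ℕ) = 0 from rfl]
    norm_num
  rw [sum5_congr _ _ point]
  exact W0 hγ F

theorem t1 (hγ : CliffordRel γ) (hF : IsAlt F) :
    (∑ f : Fin 5 → Fin n, ((-1:ℝ)^(((1:Fin 5)):ℕ) * F fun t => f ((1:Fin 5).succAbove t)) •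
      (γ (f 1) * (List.ofFn fun t => γ (f t)).prod)) = -(((n:ℝ) - 2) • S4 γ F) := by
  rw [sum_pi5]
  have point : ∀ x0 x1 x2 x3 x4 : Fin n,
      ((-1:ℝ)^(((1:Fin 5)):ℕ) * F fun t => (![x0,x1,x2,x3,x4] : Fin 5 → Fin n) ((1:Fin 5).succAbove t)) •
        (γ ((![x0,x1,x2,x3,x4] : Fin 5 → Fin n) 1) *
          (List.ofFn fun t => γ ((![x0,x1,x2,x3,x4] : Fin 5 → Fin n) t)).prod)
      = -(F ![x0,x2,x3,x4] • (γ x1 * (γ x0 * (γ x1 * (γ x2 * (γ x3 * γ x4)))))) := by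
    intro x0 x1 x2 x3 x4
    rw [P5lit, sa1, show (![x0,x1,x2,x3,x4] : Fin 5 → Fin n) 1 = x1 from rfl,
      show (((1:Fin 5)):ℕ) = 1 from rfl]
    norm_num
  rw [sum5_congr _ _ point]
  simp only [Finset.sum_neg_distrib]
  rw [W1 hγ F]

theorem t2 (hγ : CliffordRel γ) (hF : IsAlt F) :
    (∑ f : Fin 5 → Fin n, ((-1:ℝ)^(((2:Fin 5)):ℕ) * F fun t => f ((2:Fin 5).succAbove t)) •
      (γ (f 2) * (List.ofFn fun t => γ (f t)).prod)) = ((4:ℝ) - n) • S4 γ F := by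
  rw [sum_pi5]
  have point : ∀ x0 x1 x2 x3 x4 : Fin n,
      ((-1:ℝ)^(((2:Fin 5)):ℕ) * F fun t => (![x0,x1,x2,x3,x4] : Fin 5 → Fin n) ((2:Fin 5).succAbove t)) •
        (γ ((![x0,x1,x2,x3,x4] : Fin 5 → Fin n) 2) *
          (List.ofFn fun t => γ ((![x0,x1,x2,x3,x4] : Fin 5 → Fin n) t)).prod)
      = F ![x0,x1,x3,x4] • (γ x2 * (γ x0 * (γ x1 * (γ x2 * (γ x3 * γ x4))))) := by
    intro x0 x1 x2 x3 x4
    rw [P5lit, sa2, show (![x0,x1,x2,x3,x4] : Fin 5 → Fin n) 2 = x2 from rfl,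
      show (((2:Fin 5)):ℕ) = 2 from rfl]
    norm_num
  rw [sum5_congr _ _ point]
  exact W2 hγ hF

theorem t3 (hγ : CliffordRel γ) (hF : IsAlt F) :
    (∑ f : Fin 5 → Fin n, ((-1:ℝ)^(((3:Fin 5)):ℕ) * F fun t => f ((3:Fin 5).succAbove t)) •
      (γ (f 3) * (List.ofFn fun t => γ (f t)).prod)) = -(((n:ℝ) - 6) • S4 γ F) := by
  rw [sum_pi5]
  have point : ∀ x0 x1 x2 x3 x4 : Fin n,
      ((-1:ℝ)^(((3:Fin 5)):ℕ) * F fun t => (![x0,x1,x2,x3,x4] : Fin 5 → Fin n) ((3:Fin 5).succAbove t)) •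
        (γ ((![x0,x1,x2,x3,x4] : Fin 5 → Fin n) 3) *
          (List.ofFn fun t => γ ((![x0,x1,x2,x3,x4] : Fin 5 → Fin n) t)).prod)
      = -(F ![x0,x1,x2,x4] • (γ x3 * (γ x0 * (γ x1 * (γ x2 * (γ x3 * γ x4)))))) := by
    intro x0 x1 x2 x3 x4
    rw [P5lit, sa3, show (![x0,x1,x2,x3,x4] : Fin 5 → Fin n) 3 = x3 from rfl,
      show (((3:Fin 5)):ℕ) = 3 from rfl]
    norm_num
  rw [sum5_congr _ _ point]
  simp only [Finset.sum_neg_distrib]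
  rw [W3 hγ hF]

theorem t4 (hγ : CliffordRel γ) (hF : IsAlt F) :
    (∑ f : Fin 5 → Fin n, ((-1:ℝ)^(((4:Fin 5)):ℕ) * F fun t => f ((4:Fin 5).succAbove t)) •
      (γ (f 4) * (List.ofFn fun t => γ (f t)).prod)) = ((8:ℝ) - n) • S4 γ F := by
  rw [sum_pi5]
  have point : ∀ x0 x1 x2 x3 x4 : Fin n,
      ((-1:ℝ)^(((4:Fin 5)):ℕ) * F fun t => (![x0,x1,x2,x3,x4] : Fin 5 → Fin n) ((4:Fin 5).succAbove t)) •
        (γ ((![x0,x1,x2,x3,x4] : Fin 5 → Fin n) 4) *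
          (List.ofFn fun t => γ ((![x0,x1,x2,x3,x4] : Fin 5 → Fin n) t)).prod)
      = F ![x0,x1,x2,x3] • (γ x4 * (γ x0 * (γ x1 * (γ x2 * (γ x3 * γ x4))))) := by
    intro x0 x1 x2 x3 x4
    rw [P5lit, sa4, show (![x0,x1,x2,x3,x4] : Fin 5 → Fin n) 4 = x4 from rfl,
      show (((4:Fin 5)):ℕ) = 4 from rfl]
    norm_num
  rw [sum5_congr _ _ point]
  exact W4 hγ hF

theorem prod_cons_eq (a : Fin n) {k : ℕ} (g : Fin k → Fin n) :
    (List.ofFn fun i => γ ((Fin.cons a g : Fin (k+1) → Fin n) i)).prod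
      = γ a * (List.ofFn fun i => γ (g i)).prod := by
  rw [List.ofFn_succ, List.prod_cons]; rfl

theorem inter_contract (k : ℕ) (ω : Tensor n (k+1)) :
    ∑ i, γ i * rho γ (inter (Pi.single i 1) ω) = ((k+1 : ℕ) : ℝ) • rho γ ω := by
  have hins : ∀ (i : Fin n) (g : Fin k → Fin n),
      inter (Pi.single i 1) ω g = ω (Fin.cons i g) := by
    intro i g
    simp [inter, Pi.single_apply, ite_mul]
  have step : ∀ i : Fin n, γ i * rho γ (inter (Pi.single i 1) ω)
      = (k.factorial : ℝ)⁻¹ • ∑ g : Fin k → Fin n,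
          ω (Fin.cons i g) •
            (List.ofFn fun t => γ ((Fin.cons i g : Fin (k+1) → Fin n) t)).prod := by
    intro i
    rw [rho, mul_smul_comm, Finset.mul_sum]
    congr 1
    refine Finset.sum_congr rfl fun g _ => ?_
    rw [hins, mul_smul_comm, prod_cons_eq]
  rw [Finset.sum_congr rfl fun i _ => step i, ← Finset.smul_sum,
    ← sum_pi_succ (fun f => ω f • (List.ofFn fun t => γ (f t)).prod), rho, smul_smul]
  congr 1
  rw [Nat.factorial_succ]
  have h1 : (k.factorial : ℝ) ≠ 0 := Nat.cast_ne_zero.mpr k.factorial_ne_zero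
  push_cast
  field_simp

theorem gam_single (i : Fin n) : gam γ (Pi.single i 1) = γ i := by
  simp [gam, Pi.single_apply, ite_smul, zero_smul, Finset.sum_ite_eq', Finset.mem_univ, if_true]

theorem contract1 (hγ : CliffordRel γ) :
    ∑ i, γ i * gam γ (Pi.single i 1) = (-(n:ℝ)) • (1 : Matrix (Fin N) (Fin N) ℝ) := by
  have h : ∀ i : Fin n, γ i * gam γ (Pi.single i 1) = (-1:ℝ) • 1 := fun i => by
    rw [gam_single, cliffsq hγ]
  rw [Finset.sum_congr rfl fun i _ => h i, Finset.sum_const, Finset.card_univ,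
    Fintype.card_fin, ← Nat.cast_smul_eq_nsmul (R := ℝ), smul_smul]
  congr 1
  ring

theorem wedge_contract (hγ : CliffordRel γ) (hF : IsAlt F) :
    ∑ i, γ i * rho γ (wedge (Pi.single i 1) F) = ((4:ℝ) - n) • rho γ F := by
  have inner : ∀ f : Fin 5 → Fin n,
      (∑ i, wedge (Pi.single i 1) F f • (γ i * (List.ofFn fun t => γ (f t)).prod))
      = ∑ j : Fin 5, ((-1:ℝ)^(j:ℕ) * F fun t => f (j.succAbove t)) •
          (γ (f j) * (List.ofFn fun t => γ (f t)).prod) := by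
    intro f
    simp only [wedge, Finset.sum_smul]
    rw [Finset.sum_comm]
    refine Finset.sum_congr rfl fun j _ => ?_
    simp only [Pi.single_apply, mul_ite, mul_one, mul_zero, ite_mul, zero_mul, ite_smul,
      zero_smul, Finset.sum_ite_eq, Finset.mem_univ, if_true]
  have main : (∑ i, ∑ f : Fin 5 → Fin n,
      wedge (Pi.single i 1) F f • (γ i * (List.ofFn fun t => γ (f t)).prod))
      = ((20:ℝ) - 5*n) • S4 γ F := by
    rw [Finset.sum_comm, Finset.sum_congr rfl fun f _ => inner f, Finset.sum_comm,
      Fin.sum_univ_five, t0 hγ hF, t1 hγ hF, t2 hγ hF, t3 hγ hF, t4 hγ hF]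
    module
  calc ∑ i, γ i * rho γ (wedge (Pi.single i 1) F)
      = ∑ i, ((Nat.factorial 5 : ℕ) : ℝ)⁻¹ • ∑ f : Fin 5 → Fin n,
          wedge (Pi.single i 1) F f • (γ i * (List.ofFn fun t => γ (f t)).prod) := by
        refine Finset.sum_congr rfl fun i _ => ?_
        rw [rho, mul_smul_comm, Finset.mul_sum]
        congr 1
        exact Finset.sum_congr rfl fun f _ => (mul_smul_comm _ _ _)
    _ = ((Nat.factorial 5 : ℕ) : ℝ)⁻¹ • ∑ i, ∑ f : Fin 5 → Fin n,
          wedge (Pi.single i 1) F f • (γ i * (List.ofFn fun t => γ (f t)).prod) := by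
        rw [Finset.smul_sum]
    _ = ((Nat.factorial 5 : ℕ) : ℝ)⁻¹ • (((20:ℝ) - 5*n) • S4 γ F) := by rw [main]
    _ = ((4:ℝ) - n) • rho γ F := by
        rw [rhoF_eq, smul_smul, smul_smul]
        congr 1
        norm_num [Nat.factorial]
        ring

/-- If the algebraic Killing equation
`λ γ(X)Ψ + (1/4) ρ(X⌟T)Ψ + p ρ(X⌟F)Ψ + q ρ(X∧F)Ψ = 0` holds for every `X ∈ ℝⁿ`, then
contracting over an orthonormal basis yields
`-n λ Ψ + (3/4) ρ(T)Ψ + (4p - (n-4)q) ρ(F)Ψ = 0` (in particular, for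
`4p - (n-4)q = 0` the contracted equation involves only the torsion form). -/
theorem contracted_killing_equation
    {n N : ℕ} (hn : 0 < n) (hN : 0 < N)
    (γ : Fin n → Matrix (Fin N) (Fin N) ℝ) (hγ : CliffordRel γ)
    (lam p q : ℝ) (T : Tensor n 3) (hT : IsAlt T) (F : Tensor n 4) (hF : IsAlt F)
    (Ψ : Fin N → ℝ)
    (hkill : ∀ X : Fin n → ℝ,
      lam • (gam γ X).mulVec Ψ + (1 / 4 : ℝ) • (rho γ (inter X T)).mulVec Ψ
        + p • (rho γ (inter X F)).mulVec Ψ + q • (rho γ (wedge X F)).mulVec Ψ = 0) :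
    (-(n : ℝ) * lam) • Ψ + (3 / 4 : ℝ) • (rho γ T).mulVec Ψ
      + (4 * p - ((n : ℝ) - 4) * q) • (rho γ F).mulVec Ψ = 0 := by
  have hsum : (∑ i, (γ i).mulVec (lam • (gam γ (Pi.single i 1)).mulVec Ψ
      + (1 / 4 : ℝ) • (rho γ (inter (Pi.single i 1) T)).mulVec Ψ
      + p • (rho γ (inter (Pi.single i 1) F)).mulVec Ψ
      + q • (rho γ (wedge (Pi.single i 1) F)).mulVec Ψ)) = 0 := by
    simp only [hkill, Matrix.mulVec_zero, Finset.sum_const_zero]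
  have expand : ∀ i : Fin n, (γ i).mulVec (lam • (gam γ (Pi.single i 1)).mulVec Ψ
      + (1 / 4 : ℝ) • (rho γ (inter (Pi.single i 1) T)).mulVec Ψ
      + p • (rho γ (inter (Pi.single i 1) F)).mulVec Ψ
      + q • (rho γ (wedge (Pi.single i 1) F)).mulVec Ψ)
      = lam • ((γ i * gam γ (Pi.single i 1)).mulVec Ψ)
      + (1 / 4 : ℝ) • ((γ i * rho γ (inter (Pi.single i 1) T)).mulVec Ψ)
      + p • ((γ i * rho γ (inter (Pi.single i 1) F)).mulVec Ψ)
      + q • ((γ i * rho γ (wedge (Pi.single i 1) F)).mulVec Ψ) := by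
    intro i
    simp only [Matrix.mulVec_add, Matrix.mulVec_smul, Matrix.mulVec_mulVec]
  rw [Finset.sum_congr rfl fun i _ => expand i] at hsum
  simp only [Finset.sum_add_distrib, ← Finset.smul_sum] at hsum
  have sumMV : ∀ (G : Fin n → Matrix (Fin N) (Fin N) ℝ),
      (∑ i, (G i).mulVec Ψ) = (∑ i, G i).mulVec Ψ := by
    intro G
    ext x
    simp only [Matrix.mulVec, dotProduct, Finset.sum_apply, Matrix.sum_apply,
      Finset.sum_mul]
    rw [Finset.sum_comm]
  rw [sumMV, sumMV, sumMV, sumMV, contract1 hγ, inter_contract 2 T, inter_contract 3 F,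
    wedge_contract hγ hF, Matrix.smul_mulVec, Matrix.smul_mulVec,
    Matrix.smul_mulVec, Matrix.smul_mulVec, Matrix.one_mulVec] at hsum
  push_cast at hsum
  rw [← hsum]
  module
end
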